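/- Let n ≥ 4 be even. Let G be any real linear combination of the quartics a_j a_k (1 ≤ j, k ≤ n/2), b_j b_k (1 ≤ j, k < n/2), and d_j d_{n/2-j} − c_j c_{n/2-j} (1 ≤ j ≤ n/4). Then each of the quadratics a_j (1 ≤ j ≤ n/2) and b_j − b_{n/2-j} (1 ≤ j < n/4) Poisson-commutes with H₂ + G, and these quadratics pairwise Poisson-commute; in particular the truncated normal form H₂ + G of the even periodic FPU chain has the quadratic integrals a_j (1 ≤ j ≤ n/2) and b_j − b_{n/2-j} (1 ≤ j < n/4). -/

import Mathlib

/-!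
We work with polynomials on ℝ^{2n-2}, encoded as multivariate polynomials in the
variables `q_j, p_j` (`1 ≤ j ≤ n-1`).  The variable type is `ℕ ⊕ ℕ`, with
`Sum.inl j` standing for `q_j` and `Sum.inr j` for `p_j`; a polynomial on
ℝ^{2n-2} is one supported on the variables with index `1 ≤ j ≤ n-1`.
-/

/-- Variable type: `Sum.inl j ↔ q_j`, `Sum.inr j ↔ p_j`. -/
abbrev Var : Type := ℕ ⊕ ℕ

/-- The variables of ℝ^{2n-2}: `q_j, p_j` for `1 ≤ j ≤ n-1`. -/
def fpuVars (n : ℕ) : Set Var :=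
  {v | ∃ j, 1 ≤ j ∧ j ≤ n - 1 ∧ (v = Sum.inl j ∨ v = Sum.inr j)}

/-- The coordinate polynomial `q_j`. -/
noncomputable def qP (j : ℕ) : MvPolynomial Var ℝ := MvPolynomial.X (Sum.inl j)

/-- The coordinate polynomial `p_j`. -/
noncomputable def pP (j : ℕ) : MvPolynomial Var ℝ := MvPolynomial.X (Sum.inr j)

/-- The eigenvalues `ω_j = 2 sin(jπ/n)` of the linear periodic FPU problem. -/
noncomputable def omg (n j : ℕ) : ℝ := 2 * Real.sin (j * Real.pi / n)

/-- The Poisson bracket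
`{f, g} = Σ_{j=1}^{n-1} (∂f/∂q_j ∂g/∂p_j − ∂f/∂p_j ∂g/∂q_j)`. -/
noncomputable def pb (n : ℕ) (f g : MvPolynomial Var ℝ) : MvPolynomial Var ℝ :=
  ∑ j ∈ Finset.Icc 1 (n - 1),
    (MvPolynomial.pderiv (Sum.inl j) f * MvPolynomial.pderiv (Sum.inr j) g
      - MvPolynomial.pderiv (Sum.inr j) f * MvPolynomial.pderiv (Sum.inl j) g)

/-- The quadratic part `H₂ = Σ_{j=1}^{n-1} (p_j² + ω_j² q_j²)/2`. -/
noncomputable def H2 (n : ℕ) : MvPolynomial Var ℝ :=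
  ∑ j ∈ Finset.Icc 1 (n - 1),
    MvPolynomial.C (1 / 2 : ℝ) * (pP j ^ 2 + MvPolynomial.C (omg n j ^ 2) * qP j ^ 2)

/-- `a_j = (p_j² + p_{n-j}² + ω_j² q_j² + ω_j² q_{n-j}²)/(2ω_j)`, for `1 ≤ j < n/2`. -/
noncomputable def aP (n j : ℕ) : MvPolynomial Var ℝ :=
  MvPolynomial.C (1 / (2 * omg n j)) *
    (pP j ^ 2 + pP (n - j) ^ 2
      + MvPolynomial.C (omg n j ^ 2) * qP j ^ 2
      + MvPolynomial.C (omg n j ^ 2) * qP (n - j) ^ 2)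

/-- `b_j = p_j q_{n-j} − p_{n-j} q_j`, for `1 ≤ j < n/2`. -/
noncomputable def bP (n j : ℕ) : MvPolynomial Var ℝ :=
  pP j * qP (n - j) - pP (n - j) * qP j

/-- `c_j = (p_{n-j}² − p_j² + ω_j² q_{n-j}² − ω_j² q_j²)/(2ω_j)`, for `1 ≤ j < n/2`. -/
noncomputable def cP (n j : ℕ) : MvPolynomial Var ℝ :=
  MvPolynomial.C (1 / (2 * omg n j)) *
    (pP (n - j) ^ 2 - pP j ^ 2
      + MvPolynomial.C (omg n j ^ 2) * qP (n - j) ^ 2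
      - MvPolynomial.C (omg n j ^ 2) * qP j ^ 2)

/-- `d_j = (p_j p_{n-j} + ω_j² q_j q_{n-j})/ω_j`, for `1 ≤ j < n/2`. -/
noncomputable def dP (n j : ℕ) : MvPolynomial Var ℝ :=
  MvPolynomial.C (1 / omg n j) *
    (pP j * pP (n - j) + MvPolynomial.C (omg n j ^ 2) * qP j * qP (n - j))

/-- For even `n`, `a_{n/2} = (p_{n/2}² + ω_{n/2}² q_{n/2}²)/(2ω_{n/2})`. -/
noncomputable def aHalf (n : ℕ) : MvPolynomial Var ℝ :=
  MvPolynomial.C (1 / (2 * omg n (n / 2))) *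
    (pP (n / 2) ^ 2 + MvPolynomial.C (omg n (n / 2) ^ 2) * qP (n / 2) ^ 2)

/-- The linear substitution realizing the rotation symmetry `T`: for `1 ≤ j < n/2`
it rotates the planes `(q_j, q_{n-j})` and `(p_j, p_{n-j})` by the angle `2πj/n`,
and for even `n` it flips the signs of `q_{n/2}` and `p_{n/2}`.
`Tsub v` is the polynomial expressing the `v`-th coordinate of `T x`. -/
noncomputable def Tsub (n : ℕ) : Var → MvPolynomial Var ℝ := fun v =>
  match v with
  | Sum.inl m =>
      if 1 ≤ m ∧ 2 * m < n then
        MvPolynomial.C (Real.cos (2 * Real.pi * m / n)) * qP m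
          + MvPolynomial.C (Real.sin (2 * Real.pi * m / n)) * qP (n - m)
      else if 2 * m = n then - qP m
      else if n < 2 * m ∧ m ≤ n - 1 then
        MvPolynomial.C (-(Real.sin (2 * Real.pi * (n - m) / n))) * qP (n - m)
          + MvPolynomial.C (Real.cos (2 * Real.pi * (n - m) / n)) * qP m
      else qP m
  | Sum.inr m =>
      if 1 ≤ m ∧ 2 * m < n then
        MvPolynomial.C (Real.cos (2 * Real.pi * m / n)) * pP m
          + MvPolynomial.C (Real.sin (2 * Real.pi * m / n)) * pP (n - m)
      else if 2 * m = n then - pP m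
      else if n < 2 * m ∧ m ≤ n - 1 then
        MvPolynomial.C (-(Real.sin (2 * Real.pi * (n - m) / n))) * pP (n - m)
          + MvPolynomial.C (Real.cos (2 * Real.pi * (n - m) / n)) * pP m
      else pP m

/-- The linear substitution realizing the reflection symmetry `S`:
`q_j ↦ −q_j`, `p_j ↦ −p_j` for `1 ≤ j ≤ n/2`, the other coordinates are fixed.
`Ssub v` is the polynomial expressing the `v`-th coordinate of `S x`. -/
noncomputable def Ssub (n : ℕ) : Var → MvPolynomial Var ℝ := fun v =>
  match v with
  | Sum.inl m => if 1 ≤ m ∧ 2 * m ≤ n then - qP m else qP m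
  | Sum.inr m => if 1 ≤ m ∧ 2 * m ≤ n then - pP m else pP m

/-- `a_j` for `1 ≤ j ≤ n/2` (with even `n`): `aP n j` if `j < n/2`, `aHalf n` if `j = n/2`. -/
noncomputable def aE (n j : ℕ) : MvPolynomial Var ℝ :=
  if 2 * j = n then aHalf n else aP n j

/-!
STATEMENT 9: For even `n ≥ 4` and any real linear combination `G` of the quartics
`a_j a_k` (`1 ≤ j, k ≤ n/2`), `b_j b_k` (`1 ≤ j, k < n/2`) and
`d_j d_{n/2-j} − c_j c_{n/2-j}` (`1 ≤ j ≤ n/4`), the quadratics `a_j` (`1 ≤ j ≤ n/2`)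
and `b_j − b_{n/2-j}` (`1 ≤ j < n/4`) pairwise Poisson-commute and Poisson-commute with
`H₂ + G`: they are quadratic integrals of the truncated normal form `H₂ + G`.
-/

open MvPolynomial Finset

section Infra
variable (n : ℕ)

lemma pb_self (f : MvPolynomial Var ℝ) : pb n f f = 0 :=
  Finset.sum_eq_zero fun i _ => by ring

lemma pb_add_right (f g h : MvPolynomial Var ℝ) : pb n f (g + h) = pb n f g + pb n f h := by
  unfold pb
  rw [← Finset.sum_add_distrib]
  exact Finset.sum_congr rfl fun i _ => by simp [map_add]; ring

lemma pb_sub_right (f g h : MvPolynomial Var ℝ) : pb n f (g - h) = pb n f g - pb n f h := by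
  unfold pb
  rw [← Finset.sum_sub_distrib]
  exact Finset.sum_congr rfl fun i _ => by simp [map_sub]; ring

lemma pb_sub_left (f g h : MvPolynomial Var ℝ) : pb n (f - g) h = pb n f h - pb n g h := by
  unfold pb
  rw [← Finset.sum_sub_distrib]
  exact Finset.sum_congr rfl fun i _ => by simp [map_sub]; ring

lemma pb_smul_right (c : ℝ) (f g : MvPolynomial Var ℝ) : pb n f (c • g) = c • pb n f g := by
  unfold pb
  rw [Finset.smul_sum]
  refine Finset.sum_congr rfl fun i _ => ?_
  simp [map_smul, smul_eq_C_mul]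
  ring

lemma pb_zero_right (f : MvPolynomial Var ℝ) : pb n f 0 = 0 := by
  simp [pb]

lemma pb_mul_right (f g h : MvPolynomial Var ℝ) : pb n f (g * h) = pb n f g * h + g * pb n f h := by
  unfold pb
  rw [Finset.sum_mul, Finset.mul_sum, ← Finset.sum_add_distrib]
  refine Finset.sum_congr rfl fun i _ => ?_
  simp only [pderiv_mul]
  ring

lemma pb_antisymm (f g : MvPolynomial Var ℝ) : pb n g f = - pb n f g := by
  unfold pb
  rw [← Finset.sum_neg_distrib]
  exact Finset.sum_congr rfl fun i _ => by ring

/-- `f` depends only on the variables with indices `j` and `k`. -/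
def supp2 (j k : ℕ) (f : MvPolynomial Var ℝ) : Prop :=
  ∀ i, i ≠ j → i ≠ k →
    pderiv (Sum.inl i) f = 0 ∧ pderiv (Sum.inr i) f = 0

lemma pb_restrict2 (f g : MvPolynomial Var ℝ) {j k : ℕ}
    (hj : j ∈ Finset.Icc 1 (n - 1)) (hk : k ∈ Finset.Icc 1 (n - 1)) (hjk : j ≠ k)
    (h : supp2 j k f) :
    pb n f g =
      (pderiv (Sum.inl j) f * pderiv (Sum.inr j) g - pderiv (Sum.inr j) f * pderiv (Sum.inl j) g)
      + (pderiv (Sum.inl k) f * pderiv (Sum.inr k) g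
          - pderiv (Sum.inr k) f * pderiv (Sum.inl k) g) := by
  unfold pb
  rw [← Finset.sum_pair hjk (f := fun i => pderiv (Sum.inl i) f * pderiv (Sum.inr i) g
      - pderiv (Sum.inr i) f * pderiv (Sum.inl i) g)]
  refine (Finset.sum_subset ?_ ?_).symm
  · intro x hx
    simp only [Finset.mem_insert, Finset.mem_singleton] at hx
    rcases hx with rfl | rfl <;> assumption
  · intro x _ hx
    simp only [Finset.mem_insert, Finset.mem_singleton] at hx
    push_neg at hx
    obtain ⟨h1, h2⟩ := h x hx.1 hx.2
    rw [h1, h2]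
    ring

lemma pb_restrict1 (f g : MvPolynomial Var ℝ) {j : ℕ}
    (hj : j ∈ Finset.Icc 1 (n - 1)) (h : supp2 j j f) :
    pb n f g =
      pderiv (Sum.inl j) f * pderiv (Sum.inr j) g
        - pderiv (Sum.inr j) f * pderiv (Sum.inl j) g := by
  unfold pb
  rw [← Finset.sum_singleton
    (f := fun i => pderiv (Sum.inl i) f * pderiv (Sum.inr i) g
      - pderiv (Sum.inr i) f * pderiv (Sum.inl i) g) j]
  refine (Finset.sum_subset ?_ ?_).symm
  · intro x hx
    simp only [Finset.mem_singleton] at hx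
    subst hx; assumption
  · intro x _ hx
    simp only [Finset.mem_singleton] at hx
    obtain ⟨h1, h2⟩ := h x hx hx
    rw [h1, h2]
    ring

lemma pb_disjoint (f g : MvPolynomial Var ℝ) {j k l m : ℕ}
    (hf : supp2 j k f) (hg : supp2 l m g)
    (h1 : j ≠ l) (h2 : j ≠ m) (h3 : k ≠ l) (h4 : k ≠ m) :
    pb n f g = 0 := by
  refine Finset.sum_eq_zero fun i _ => ?_
  by_cases hij : i = j
  · obtain ⟨e1, e2⟩ := hg i (by rw [hij]; exact h1) (by rw [hij]; exact h2)
    rw [e1, e2]; ring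
  · by_cases hik : i = k
    · obtain ⟨e1, e2⟩ := hg i (by rw [hik]; exact h3) (by rw [hik]; exact h4)
      rw [e1, e2]; ring
    · obtain ⟨e1, e2⟩ := hf i hij hik
      rw [e1, e2]; ring

lemma supp_aP (j : ℕ) : supp2 j (n - j) (aP n j) := by
  intro i h1 h2
  constructor <;> simp [aP, qP, pP, pderiv_pow, pderiv_X, h1, h2, Ne.symm h1, Ne.symm h2]

lemma supp_bP (j : ℕ) : supp2 j (n - j) (bP n j) := by
  intro i h1 h2
  constructor <;> simp [bP, qP, pP, pderiv_mul, pderiv_X, h1, h2, Ne.symm h1, Ne.symm h2]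

lemma supp_cP (j : ℕ) : supp2 j (n - j) (cP n j) := by
  intro i h1 h2
  constructor <;> simp [cP, qP, pP, pderiv_pow, pderiv_X, h1, h2, Ne.symm h1, Ne.symm h2]

lemma supp_dP (j : ℕ) : supp2 j (n - j) (dP n j) := by
  intro i h1 h2
  constructor <;> simp [dP, qP, pP, pderiv_mul, pderiv_X, h1, h2, Ne.symm h1, Ne.symm h2]

lemma supp_aHalf : supp2 (n / 2) (n / 2) (aHalf n) := by
  intro i h1 _
  constructor <;> simp [aHalf, qP, pP, pderiv_pow, pderiv_X, h1, Ne.symm h1]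

end Infra
section Brackets
open MvPolynomial Finset

lemma C2_eq : (MvPolynomial.C (2:ℝ) : MvPolynomial Var ℝ) = 2 := by simp [map_ofNat]

lemma omg_sub {n j : ℕ} (hj : j ≤ n) (hn : 0 < n) : omg n (n - j) = omg n j := by
  unfold omg
  rw [Nat.cast_sub hj]
  have hn' : (n : ℝ) ≠ 0 := Nat.cast_ne_zero.mpr hn.ne'
  rw [show ((n : ℝ) - j) * Real.pi / n = Real.pi - j * Real.pi / n by field_simp,
    Real.sin_pi_sub]

lemma pderiv_H2_inr (n i : ℕ) (hi : i ∈ Finset.Icc 1 (n - 1)) :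
    pderiv (Sum.inr i) (H2 n) = MvPolynomial.C (1 / 2 : ℝ) * (2 * pP i) := by
  unfold H2
  rw [map_sum, Finset.sum_eq_single i]
  · simp [pP, qP, pderiv_pow, pderiv_X]
    try ring
  · intro l _ hl
    simp [pP, qP, pderiv_pow, pderiv_X, Ne.symm hl]
  · intro h; exact absurd hi h

lemma pderiv_H2_inl (n i : ℕ) (hi : i ∈ Finset.Icc 1 (n - 1)) :
    pderiv (Sum.inl i) (H2 n) =
      MvPolynomial.C (1 / 2 : ℝ) * (MvPolynomial.C (omg n i ^ 2) * (2 * qP i)) := by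
  unfold H2
  rw [map_sum, Finset.sum_eq_single i]
  · simp [pP, qP, pderiv_pow, pderiv_X]
    try ring
  · intro l _ hl
    simp [pP, qP, pderiv_pow, pderiv_X, Ne.symm hl]
  · intro h; exact absurd hi h

lemma idx_ne {n j : ℕ} (h1 : 1 ≤ j) (h2 : 2 * j < n) : j ≠ n - j := by omega
lemma idx_memj {n j : ℕ} (h1 : 1 ≤ j) (h2 : 2 * j < n) : j ∈ Finset.Icc 1 (n - 1) := by
  simp [Finset.mem_Icc]; omega
lemma idx_memnj {n j : ℕ} (h1 : 1 ≤ j) (h2 : 2 * j < n) : n - j ∈ Finset.Icc 1 (n - 1) := by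
  simp [Finset.mem_Icc]; omega

section Derivs
variable {n j : ℕ} (hne : j ≠ n - j)
include hne

lemma pd_aP_lj : pderiv (Sum.inl j) (aP n j) =
    MvPolynomial.C (1 / (2 * omg n j)) * (MvPolynomial.C (omg n j ^ 2) * (2 * qP j)) := by
  simp [aP, qP, pP, pderiv_pow, pderiv_X, hne, Ne.symm hne]; try ring

lemma pd_aP_rj : pderiv (Sum.inr j) (aP n j) =
    MvPolynomial.C (1 / (2 * omg n j)) * (2 * pP j) := by
  simp [aP, qP, pP, pderiv_pow, pderiv_X, hne, Ne.symm hne]; try ring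

lemma pd_aP_lnj : pderiv (Sum.inl (n - j)) (aP n j) =
    MvPolynomial.C (1 / (2 * omg n j)) * (MvPolynomial.C (omg n j ^ 2) * (2 * qP (n - j))) := by
  simp [aP, qP, pP, pderiv_pow, pderiv_X, hne, Ne.symm hne]; try ring

lemma pd_aP_rnj : pderiv (Sum.inr (n - j)) (aP n j) =
    MvPolynomial.C (1 / (2 * omg n j)) * (2 * pP (n - j)) := by
  simp [aP, qP, pP, pderiv_pow, pderiv_X, hne, Ne.symm hne]; try ring

lemma pd_bP_lj : pderiv (Sum.inl j) (bP n j) = - pP (n - j) := by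
  simp [bP, qP, pP, pderiv_mul, pderiv_X, hne, Ne.symm hne]; try ring

lemma pd_bP_rj : pderiv (Sum.inr j) (bP n j) = qP (n - j) := by
  simp [bP, qP, pP, pderiv_mul, pderiv_X, hne, Ne.symm hne]; try ring

lemma pd_bP_lnj : pderiv (Sum.inl (n - j)) (bP n j) = pP j := by
  simp [bP, qP, pP, pderiv_mul, pderiv_X, hne, Ne.symm hne]; try ring

lemma pd_bP_rnj : pderiv (Sum.inr (n - j)) (bP n j) = - qP j := by
  simp [bP, qP, pP, pderiv_mul, pderiv_X, hne, Ne.symm hne]; try ring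

lemma pd_cP_lj : pderiv (Sum.inl j) (cP n j) =
    - (MvPolynomial.C (1 / (2 * omg n j)) * (MvPolynomial.C (omg n j ^ 2) * (2 * qP j))) := by
  simp [cP, qP, pP, pderiv_pow, pderiv_X, hne, Ne.symm hne]; try ring

lemma pd_cP_rj : pderiv (Sum.inr j) (cP n j) =
    - (MvPolynomial.C (1 / (2 * omg n j)) * (2 * pP j)) := by
  simp [cP, qP, pP, pderiv_pow, pderiv_X, hne, Ne.symm hne]; try ring

lemma pd_cP_lnj : pderiv (Sum.inl (n - j)) (cP n j) =
    MvPolynomial.C (1 / (2 * omg n j)) * (MvPolynomial.C (omg n j ^ 2) * (2 * qP (n - j))) := by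
  simp [cP, qP, pP, pderiv_pow, pderiv_X, hne, Ne.symm hne]; try ring

lemma pd_cP_rnj : pderiv (Sum.inr (n - j)) (cP n j) =
    MvPolynomial.C (1 / (2 * omg n j)) * (2 * pP (n - j)) := by
  simp [cP, qP, pP, pderiv_pow, pderiv_X, hne, Ne.symm hne]; try ring

lemma pd_dP_lj : pderiv (Sum.inl j) (dP n j) =
    MvPolynomial.C (1 / omg n j) * (MvPolynomial.C (omg n j ^ 2) * qP (n - j)) := by
  simp [dP, qP, pP, pderiv_mul, pderiv_X, hne, Ne.symm hne]; try ring
  try tauto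

lemma pd_dP_rj : pderiv (Sum.inr j) (dP n j) =
    MvPolynomial.C (1 / omg n j) * pP (n - j) := by
  simp [dP, qP, pP, pderiv_mul, pderiv_X, hne, Ne.symm hne]; try ring
  try tauto

lemma pd_dP_lnj : pderiv (Sum.inl (n - j)) (dP n j) =
    MvPolynomial.C (1 / omg n j) * (MvPolynomial.C (omg n j ^ 2) * qP j) := by
  simp [dP, qP, pP, pderiv_mul, pderiv_X, hne, Ne.symm hne]; try ring
  try tauto

lemma pd_dP_rnj : pderiv (Sum.inr (n - j)) (dP n j) =
    MvPolynomial.C (1 / omg n j) * pP j := by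
  simp [dP, qP, pP, pderiv_mul, pderiv_X, hne, Ne.symm hne]; try ring
  try tauto

end Derivs

lemma pd_aHalf_l (n : ℕ) : pderiv (Sum.inl (n / 2)) (aHalf n) =
    MvPolynomial.C (1 / (2 * omg n (n / 2))) *
      (MvPolynomial.C (omg n (n / 2) ^ 2) * (2 * qP (n / 2))) := by
  simp [aHalf, qP, pP, pderiv_pow, pderiv_X]; try ring

lemma pd_aHalf_r (n : ℕ) : pderiv (Sum.inr (n / 2)) (aHalf n) =
    MvPolynomial.C (1 / (2 * omg n (n / 2))) * (2 * pP (n / 2)) := by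
  simp [aHalf, qP, pP, pderiv_pow, pderiv_X]; try ring

section SameBrackets
variable {n j : ℕ} (h1 : 1 ≤ j) (h2 : 2 * j < n)
include h1 h2

lemma pb_aP_bP : pb n (aP n j) (bP n j) = 0 := by
  have hne := idx_ne h1 h2
  rw [pb_restrict2 n _ _ (idx_memj h1 h2) (idx_memnj h1 h2) hne (supp_aP n j),
    pd_aP_lj hne, pd_aP_rj hne, pd_aP_lnj hne, pd_aP_rnj hne,
    pd_bP_lj hne, pd_bP_rj hne, pd_bP_lnj hne, pd_bP_rnj hne]
  ring

lemma pb_aP_cP : pb n (aP n j) (cP n j) = 0 := by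
  have hne := idx_ne h1 h2
  rw [pb_restrict2 n _ _ (idx_memj h1 h2) (idx_memnj h1 h2) hne (supp_aP n j),
    pd_aP_lj hne, pd_aP_rj hne, pd_aP_lnj hne, pd_aP_rnj hne,
    pd_cP_lj hne, pd_cP_rj hne, pd_cP_lnj hne, pd_cP_rnj hne]
  ring

lemma pb_aP_dP : pb n (aP n j) (dP n j) = 0 := by
  have hne := idx_ne h1 h2
  rw [pb_restrict2 n _ _ (idx_memj h1 h2) (idx_memnj h1 h2) hne (supp_aP n j),
    pd_aP_lj hne, pd_aP_rj hne, pd_aP_lnj hne, pd_aP_rnj hne,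
    pd_dP_lj hne, pd_dP_rj hne, pd_dP_lnj hne, pd_dP_rnj hne]
  ring

lemma pb_bP_cP : pb n (bP n j) (cP n j) = 2 * dP n j := by
  have hne := idx_ne h1 h2
  rw [pb_restrict2 n _ _ (idx_memj h1 h2) (idx_memnj h1 h2) hne (supp_bP n j),
    pd_bP_lj hne, pd_bP_rj hne, pd_bP_lnj hne, pd_bP_rnj hne,
    pd_cP_lj hne, pd_cP_rj hne, pd_cP_lnj hne, pd_cP_rnj hne]
  unfold dP
  have hst : (4 : MvPolynomial Var ℝ) * MvPolynomial.C (1 / (2 * omg n j))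
      = 2 * MvPolynomial.C (1 / omg n j) := by
    rw [show (4 : MvPolynomial Var ℝ) = MvPolynomial.C (4:ℝ) by norm_num [map_ofNat],
      show (2 : MvPolynomial Var ℝ) = MvPolynomial.C (2:ℝ) by norm_num [map_ofNat],
      ← map_mul, ← map_mul]
    congr 1
    rw [one_div, one_div, mul_inv]
    ring
  linear_combination (pP j * pP (n - j)
    + MvPolynomial.C (omg n j ^ 2) * qP j * qP (n - j)) * hst

lemma pb_bP_dP : pb n (bP n j) (dP n j) = - (2 * cP n j) := by
  have hne := idx_ne h1 h2
  rw [pb_restrict2 n _ _ (idx_memj h1 h2) (idx_memnj h1 h2) hne (supp_bP n j),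
    pd_bP_lj hne, pd_bP_rj hne, pd_bP_lnj hne, pd_bP_rnj hne,
    pd_dP_lj hne, pd_dP_rj hne, pd_dP_lnj hne, pd_dP_rnj hne]
  unfold cP
  have hst : (MvPolynomial.C (1 / omg n j) : MvPolynomial Var ℝ)
      = 2 * MvPolynomial.C (1 / (2 * omg n j)) := by
    rw [show (2 : MvPolynomial Var ℝ) = MvPolynomial.C (2:ℝ) by norm_num [map_ofNat],
      ← map_mul]
    congr 1
    rw [one_div, one_div, mul_inv]
    ring
  linear_combination (pP j ^ 2 - pP (n - j) ^ 2
    + MvPolynomial.C (omg n j ^ 2) * (qP j ^ 2 - qP (n - j) ^ 2)) * hst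

lemma pb_aP_H2 : pb n (aP n j) (H2 n) = 0 := by
  have hne := idx_ne h1 h2
  rw [pb_restrict2 n _ _ (idx_memj h1 h2) (idx_memnj h1 h2) hne (supp_aP n j),
    pd_aP_lj hne, pd_aP_rj hne, pd_aP_lnj hne, pd_aP_rnj hne,
    pderiv_H2_inl n j (idx_memj h1 h2), pderiv_H2_inr n j (idx_memj h1 h2),
    pderiv_H2_inl n (n - j) (idx_memnj h1 h2), pderiv_H2_inr n (n - j) (idx_memnj h1 h2),
    omg_sub (by omega) (by omega)]
  ring

lemma pb_bP_H2 : pb n (bP n j) (H2 n) = 0 := by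
  have hne := idx_ne h1 h2
  rw [pb_restrict2 n _ _ (idx_memj h1 h2) (idx_memnj h1 h2) hne (supp_bP n j),
    pd_bP_lj hne, pd_bP_rj hne, pd_bP_lnj hne, pd_bP_rnj hne,
    pderiv_H2_inl n j (idx_memj h1 h2), pderiv_H2_inr n j (idx_memj h1 h2),
    pderiv_H2_inl n (n - j) (idx_memnj h1 h2), pderiv_H2_inr n (n - j) (idx_memnj h1 h2),
    omg_sub (by omega) (by omega)]
  ring

end SameBrackets

lemma pb_aHalf_H2 {n : ℕ} (hn : 4 ≤ n) (heven : 2 ∣ n) : pb n (aHalf n) (H2 n) = 0 := by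
  have hm : n / 2 ∈ Finset.Icc 1 (n - 1) := by simp [Finset.mem_Icc]; omega
  rw [pb_restrict1 n _ _ hm (supp_aHalf n),
    pd_aHalf_l n, pd_aHalf_r n,
    pderiv_H2_inl n (n / 2) hm, pderiv_H2_inr n (n / 2) hm]
  ring

end Brackets
section Mid
open MvPolynomial Finset

variable {n : ℕ}

lemma pb_cross {j k : ℕ} (f g : MvPolynomial Var ℝ)
    (hf : supp2 j (n - j) f) (hg : supp2 k (n - k) g)
    (h1 : 1 ≤ j) (h2 : 2 * j < n) (h3 : 1 ≤ k) (h4 : 2 * k < n) (hjk : j ≠ k) :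
    pb n f g = 0 :=
  pb_disjoint n f g hf hg hjk (by omega) (by omega) (by omega)

lemma pb_bP_cP_ne {j k : ℕ} (h1 : 1 ≤ j) (h2 : 2 * j < n) (h3 : 1 ≤ k) (h4 : 2 * k < n)
    (hjk : j ≠ k) : pb n (bP n j) (cP n k) = 0 :=
  pb_cross _ _ (supp_bP n j) (supp_cP n k) h1 h2 h3 h4 hjk

lemma pb_bP_dP_ne {j k : ℕ} (h1 : 1 ≤ j) (h2 : 2 * j < n) (h3 : 1 ≤ k) (h4 : 2 * k < n)
    (hjk : j ≠ k) : pb n (bP n j) (dP n k) = 0 :=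
  pb_cross _ _ (supp_bP n j) (supp_dP n k) h1 h2 h3 h4 hjk

lemma pb_bP_bP {j k : ℕ} (h1 : 1 ≤ j) (h2 : 2 * j < n) (h3 : 1 ≤ k) (h4 : 2 * k < n) :
    pb n (bP n j) (bP n k) = 0 := by
  rcases eq_or_ne j k with rfl | hjk
  · exact pb_self n _
  · exact pb_cross _ _ (supp_bP n j) (supp_bP n k) h1 h2 h3 h4 hjk

lemma pb_aE_aE (heven : 2 ∣ n) {j k : ℕ} (hj1 : 1 ≤ j) (hj2 : 2 * j ≤ n)
    (hk1 : 1 ≤ k) (hk2 : 2 * k ≤ n) : pb n (aE n j) (aE n k) = 0 := by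
  unfold aE
  rcases eq_or_ne (2 * j) n with e1 | e1 <;> rcases eq_or_ne (2 * k) n with e2 | e2
  · rw [if_pos e1, if_pos e2]; exact pb_self n _
  · rw [if_pos e1, if_neg e2]
    exact pb_disjoint n _ _ (supp_aHalf n) (supp_aP n k)
      (by omega) (by omega) (by omega) (by omega)
  · rw [if_neg e1, if_pos e2]
    exact pb_disjoint n _ _ (supp_aP n j) (supp_aHalf n)
      (by omega) (by omega) (by omega) (by omega)
  · rw [if_neg e1, if_neg e2]
    rcases eq_or_ne j k with rfl | hjk
    · exact pb_self n _
    · exact pb_cross _ _ (supp_aP n j) (supp_aP n k) hj1 (by omega) hk1 (by omega) hjk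

lemma pb_aE_bP (heven : 2 ∣ n) {j k : ℕ} (hj1 : 1 ≤ j) (hj2 : 2 * j ≤ n)
    (hk1 : 1 ≤ k) (hk2 : 2 * k < n) : pb n (aE n j) (bP n k) = 0 := by
  unfold aE
  rcases eq_or_ne (2 * j) n with e1 | e1
  · rw [if_pos e1]
    exact pb_disjoint n _ _ (supp_aHalf n) (supp_bP n k)
      (by omega) (by omega) (by omega) (by omega)
  · rw [if_neg e1]
    rcases eq_or_ne j k with rfl | hjk
    · exact pb_aP_bP hj1 (by omega)
    · exact pb_cross _ _ (supp_aP n j) (supp_bP n k) hj1 (by omega) hk1 hk2 hjk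

lemma pb_aE_cP (heven : 2 ∣ n) {j k : ℕ} (hj1 : 1 ≤ j) (hj2 : 2 * j ≤ n)
    (hk1 : 1 ≤ k) (hk2 : 2 * k < n) : pb n (aE n j) (cP n k) = 0 := by
  unfold aE
  rcases eq_or_ne (2 * j) n with e1 | e1
  · rw [if_pos e1]
    exact pb_disjoint n _ _ (supp_aHalf n) (supp_cP n k)
      (by omega) (by omega) (by omega) (by omega)
  · rw [if_neg e1]
    rcases eq_or_ne j k with rfl | hjk
    · exact pb_aP_cP hj1 (by omega)
    · exact pb_cross _ _ (supp_aP n j) (supp_cP n k) hj1 (by omega) hk1 hk2 hjk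

lemma pb_aE_dP (heven : 2 ∣ n) {j k : ℕ} (hj1 : 1 ≤ j) (hj2 : 2 * j ≤ n)
    (hk1 : 1 ≤ k) (hk2 : 2 * k < n) : pb n (aE n j) (dP n k) = 0 := by
  unfold aE
  rcases eq_or_ne (2 * j) n with e1 | e1
  · rw [if_pos e1]
    exact pb_disjoint n _ _ (supp_aHalf n) (supp_dP n k)
      (by omega) (by omega) (by omega) (by omega)
  · rw [if_neg e1]
    rcases eq_or_ne j k with rfl | hjk
    · exact pb_aP_dP hj1 (by omega)
    · exact pb_cross _ _ (supp_aP n j) (supp_dP n k) hj1 (by omega) hk1 hk2 hjk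

lemma pb_bP_aE (heven : 2 ∣ n) {j k : ℕ} (hj1 : 1 ≤ j) (hj2 : 2 * j < n)
    (hk1 : 1 ≤ k) (hk2 : 2 * k ≤ n) : pb n (bP n j) (aE n k) = 0 := by
  rw [pb_antisymm n (aE n k) (bP n j), pb_aE_bP heven hk1 hk2 hj1 hj2, neg_zero]

lemma pb_aE_H2 (hn : 4 ≤ n) (heven : 2 ∣ n) {j : ℕ} (hj1 : 1 ≤ j) (hj2 : 2 * j ≤ n) :
    pb n (aE n j) (H2 n) = 0 := by
  unfold aE
  rcases eq_or_ne (2 * j) n with e1 | e1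
  · rw [if_pos e1]; exact pb_aHalf_H2 hn heven
  · rw [if_neg e1]; exact pb_aP_H2 hj1 (by omega)

end Mid
section Gen
open MvPolynomial Finset

variable {n : ℕ}

lemma pb_aE_gen1 (heven : 2 ∣ n) {j' j k : ℕ} (h1 : 1 ≤ j') (h2 : 2 * j' ≤ n)
    (hj1 : 1 ≤ j) (hj2 : 2 * j ≤ n) (hk1 : 1 ≤ k) (hk2 : 2 * k ≤ n) :
    pb n (aE n j') (aE n j * aE n k) = 0 := by
  rw [pb_mul_right, pb_aE_aE heven h1 h2 hj1 hj2, pb_aE_aE heven h1 h2 hk1 hk2]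
  ring

lemma pb_aE_gen2 (heven : 2 ∣ n) {j' j k : ℕ} (h1 : 1 ≤ j') (h2 : 2 * j' ≤ n)
    (hj1 : 1 ≤ j) (hj2 : 2 * j < n) (hk1 : 1 ≤ k) (hk2 : 2 * k < n) :
    pb n (aE n j') (bP n j * bP n k) = 0 := by
  rw [pb_mul_right, pb_aE_bP heven h1 h2 hj1 hj2, pb_aE_bP heven h1 h2 hk1 hk2]
  ring

lemma pb_aE_gen3 (hn : 4 ≤ n) (heven : 2 ∣ n) {j' j : ℕ} (h1 : 1 ≤ j') (h2 : 2 * j' ≤ n)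
    (hj1 : 1 ≤ j) (hj2 : 4 * j ≤ n) :
    pb n (aE n j') (dP n j * dP n (n / 2 - j) - cP n j * cP n (n / 2 - j)) = 0 := by
  rw [pb_sub_right, pb_mul_right, pb_mul_right,
    pb_aE_dP heven h1 h2 hj1 (by omega), pb_aE_dP heven h1 h2 (k := n / 2 - j) (by omega) (by omega),
    pb_aE_cP heven h1 h2 hj1 (by omega), pb_aE_cP heven h1 h2 (k := n / 2 - j) (by omega) (by omega)]
  ring

lemma pb_bsub_aE (heven : 2 ∣ n) (hn : 4 ≤ n) {j' k : ℕ} (h1 : 1 ≤ j') (h2 : 4 * j' < n)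
    (hk1 : 1 ≤ k) (hk2 : 2 * k ≤ n) :
    pb n (bP n j' - bP n (n / 2 - j')) (aE n k) = 0 := by
  rw [pb_sub_left, pb_bP_aE heven h1 (by omega) hk1 hk2,
    pb_bP_aE heven (j := n / 2 - j') (by omega) (by omega) hk1 hk2]
  ring

lemma pb_bsub_bP (heven : 2 ∣ n) (hn : 4 ≤ n) {j' k : ℕ} (h1 : 1 ≤ j') (h2 : 4 * j' < n)
    (hk1 : 1 ≤ k) (hk2 : 2 * k < n) :
    pb n (bP n j' - bP n (n / 2 - j')) (bP n k) = 0 := by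
  rw [pb_sub_left, pb_bP_bP h1 (by omega) hk1 hk2,
    pb_bP_bP (j := n / 2 - j') (by omega) (by omega) hk1 hk2]
  ring

lemma pb_bsub_gen1 (heven : 2 ∣ n) (hn : 4 ≤ n) {j' j k : ℕ} (h1 : 1 ≤ j') (h2 : 4 * j' < n)
    (hj1 : 1 ≤ j) (hj2 : 2 * j ≤ n) (hk1 : 1 ≤ k) (hk2 : 2 * k ≤ n) :
    pb n (bP n j' - bP n (n / 2 - j')) (aE n j * aE n k) = 0 := by
  rw [pb_mul_right, pb_bsub_aE heven hn h1 h2 hj1 hj2, pb_bsub_aE heven hn h1 h2 hk1 hk2]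
  ring

lemma pb_bsub_gen2 (heven : 2 ∣ n) (hn : 4 ≤ n) {j' j k : ℕ} (h1 : 1 ≤ j') (h2 : 4 * j' < n)
    (hj1 : 1 ≤ j) (hj2 : 2 * j < n) (hk1 : 1 ≤ k) (hk2 : 2 * k < n) :
    pb n (bP n j' - bP n (n / 2 - j')) (bP n j * bP n k) = 0 := by
  rw [pb_mul_right, pb_bsub_bP heven hn h1 h2 hj1 hj2, pb_bsub_bP heven hn h1 h2 hk1 hk2]
  ring

lemma pb_bsub_gen3 (heven : 2 ∣ n) (hn : 4 ≤ n) {j' j : ℕ} (h1 : 1 ≤ j') (h2 : 4 * j' < n)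
    (hj1 : 1 ≤ j) (hj2 : 4 * j ≤ n) :
    pb n (bP n j' - bP n (n / 2 - j')) (dP n j * dP n (n / 2 - j) - cP n j * cP n (n / 2 - j)) = 0 := by
  have hm'1 : 1 ≤ n / 2 - j' := by omega
  have hm'2 : 2 * (n / 2 - j') < n := by omega
  have hm1 : 1 ≤ n / 2 - j := by omega
  have hm2 : 2 * (n / 2 - j) < n := by omega
  have hj2' : 2 * j < n := by omega
  rw [pb_sub_left, pb_sub_right, pb_sub_right, pb_mul_right, pb_mul_right,
    pb_mul_right, pb_mul_right]
  by_cases hA : j' = j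
  · subst hA
    have hBm : j' ≠ n / 2 - j' := by omega
    rw [pb_bP_dP h1 hj2', pb_bP_dP_ne h1 hj2' hm1 hm2 hBm,
      pb_bP_cP h1 hj2', pb_bP_cP_ne h1 hj2' hm1 hm2 hBm,
      pb_bP_dP_ne hm1 hm2 h1 hj2' (Ne.symm hBm), pb_bP_dP hm1 hm2,
      pb_bP_cP_ne hm1 hm2 h1 hj2' (Ne.symm hBm), pb_bP_cP hm1 hm2]
    ring
  · by_cases hB : j' = n / 2 - j
    · have hm'j : n / 2 - j' = j := by omega
      have hjm : j ≠ n / 2 - j := by omega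
      rw [hm'j, hB]
      rw [pb_bP_dP_ne hm1 hm2 hj1 hj2' (Ne.symm hjm), pb_bP_dP hm1 hm2,
        pb_bP_cP_ne hm1 hm2 hj1 hj2' (Ne.symm hjm), pb_bP_cP hm1 hm2,
        pb_bP_dP hj1 hj2', pb_bP_dP_ne hj1 hj2' hm1 hm2 hjm,
        pb_bP_cP hj1 hj2', pb_bP_cP_ne hj1 hj2' hm1 hm2 hjm]
      ring
    · have h3 : n / 2 - j' ≠ j := by omega
      have h4 : n / 2 - j' ≠ n / 2 - j := by omega
      have h2' : 2 * j' < n := by omega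
      rw [pb_bP_dP_ne h1 h2' hj1 hj2' hA, pb_bP_dP_ne h1 h2' hm1 hm2 hB,
        pb_bP_cP_ne h1 h2' hj1 hj2' hA, pb_bP_cP_ne h1 h2' hm1 hm2 hB,
        pb_bP_dP_ne hm'1 hm'2 hj1 hj2' h3, pb_bP_dP_ne hm'1 hm'2 hm1 hm2 h4,
        pb_bP_cP_ne hm'1 hm'2 hj1 hj2' h3, pb_bP_cP_ne hm'1 hm'2 hm1 hm2 h4]
      ring

end Gen
theorem even_chain_truncated_normal_form_integrals (n : ℕ) (hn : 4 ≤ n) (heven : 2 ∣ n)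
    (G : MvPolynomial Var ℝ)
    (hG : G ∈ Submodule.span ℝ
      ({g | ∃ j k, 1 ≤ j ∧ 2 * j ≤ n ∧ 1 ≤ k ∧ 2 * k ≤ n ∧ g = aE n j * aE n k}
        ∪ {g | ∃ j k, 1 ≤ j ∧ 2 * j < n ∧ 1 ≤ k ∧ 2 * k < n ∧ g = bP n j * bP n k}
        ∪ {g | ∃ j, 1 ≤ j ∧ 4 * j ≤ n ∧
            g = dP n j * dP n (n / 2 - j) - cP n j * cP n (n / 2 - j)})) :
    (∀ f ∈ ({g | ∃ j, 1 ≤ j ∧ 2 * j ≤ n ∧ g = aE n j}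
          ∪ {g | ∃ j, 1 ≤ j ∧ 4 * j < n ∧ g = bP n j - bP n (n / 2 - j)} :
          Set (MvPolynomial Var ℝ)),
      pb n f (H2 n + G) = 0) ∧
    (∀ f ∈ ({g | ∃ j, 1 ≤ j ∧ 2 * j ≤ n ∧ g = aE n j}
          ∪ {g | ∃ j, 1 ≤ j ∧ 4 * j < n ∧ g = bP n j - bP n (n / 2 - j)} :
          Set (MvPolynomial Var ℝ)),
      ∀ g ∈ ({g | ∃ j, 1 ≤ j ∧ 2 * j ≤ n ∧ g = aE n j}
          ∪ {g | ∃ j, 1 ≤ j ∧ 4 * j < n ∧ g = bP n j - bP n (n / 2 - j)} :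
          Set (MvPolynomial Var ℝ)),
        pb n f g = 0) := by
  constructor
  · rintro f (⟨j, hj1, hj2, rfl⟩ | ⟨j, hj1, hj2, rfl⟩)
    · -- f = aE n j
      have hH2 : pb n (aE n j) (H2 n) = 0 := pb_aE_H2 hn heven hj1 hj2
      have hGz : pb n (aE n j) G = 0 := by
        refine Submodule.span_induction ?_ ?_ ?_ ?_ hG
        · rintro x ((⟨j₀, k₀, ha1, ha2, ha3, ha4, rfl⟩ | ⟨j₀, k₀, hb1, hb2, hb3, hb4, rfl⟩)
            | ⟨j₀, hc1, hc2, rfl⟩)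
          · exact pb_aE_gen1 heven hj1 hj2 ha1 ha2 ha3 ha4
          · exact pb_aE_gen2 heven hj1 hj2 hb1 hb2 hb3 hb4
          · exact pb_aE_gen3 hn heven hj1 hj2 hc1 hc2
        · exact pb_zero_right n _
        · intro x y _ _ hx hy; rw [pb_add_right, hx, hy, add_zero]
        · intro a x _ hx; rw [pb_smul_right, hx, smul_zero]
      rw [pb_add_right, hH2, hGz, add_zero]
    · -- f = bP n j - bP n (n/2 - j)
      have hH2 : pb n (bP n j - bP n (n / 2 - j)) (H2 n) = 0 := by
        rw [pb_sub_left, pb_bP_H2 hj1 (by omega),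
          pb_bP_H2 (j := n / 2 - j) (by omega) (by omega), sub_zero]
      have hGz : pb n (bP n j - bP n (n / 2 - j)) G = 0 := by
        refine Submodule.span_induction ?_ ?_ ?_ ?_ hG
        · rintro x ((⟨j₀, k₀, ha1, ha2, ha3, ha4, rfl⟩ | ⟨j₀, k₀, hb1, hb2, hb3, hb4, rfl⟩)
            | ⟨j₀, hc1, hc2, rfl⟩)
          · exact pb_bsub_gen1 heven hn hj1 hj2 ha1 ha2 ha3 ha4
          · exact pb_bsub_gen2 heven hn hj1 hj2 hb1 hb2 hb3 hb4
          · exact pb_bsub_gen3 heven hn hj1 hj2 hc1 hc2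
        · exact pb_zero_right n _
        · intro x y _ _ hx hy; rw [pb_add_right, hx, hy, add_zero]
        · intro a x _ hx; rw [pb_smul_right, hx, smul_zero]
      rw [pb_add_right, hH2, hGz, add_zero]
  · rintro f (⟨j, hj1, hj2, rfl⟩ | ⟨j, hj1, hj2, rfl⟩) g
      (⟨k, hk1, hk2, rfl⟩ | ⟨k, hk1, hk2, rfl⟩)
    · exact pb_aE_aE heven hj1 hj2 hk1 hk2
    · rw [pb_sub_right, pb_aE_bP heven hj1 hj2 hk1 (by omega),
        pb_aE_bP heven hj1 hj2 (k := n / 2 - k) (by omega) (by omega), sub_zero]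
    · exact pb_bsub_aE heven hn hj1 hj2 hk1 hk2
    · rw [pb_sub_right, pb_bsub_bP heven hn hj1 hj2 hk1 (by omega),
        pb_bsub_bP heven hn hj1 hj2 (k := n / 2 - k) (by omega) (by omega), sub_zero]
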